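/- Let α > 1, t ∈ (1 − 1/α, 1), and suppose the irrational θ ∈ [0,1] satisfies A_α(θ) < ∞, i.e., there is c > 1 with a_{k+1} qₖ^{1-α} < c for all sufficiently large k. Then for r = α − (α−1)/t, limsup_{m→∞} qₘ^{tr} Σ_{k≥m} Σ_{j=1}^{a_{k+1}} (j qₖ + qₖ₋₁)^{-t} < ∞, and for any 0 < r < α − (α−1)/t this limsup equals 0. -/

import Mathlib

/-!
Write `s = tα - (α - 1)`, which is positive exactly when `t > 1 - 1/α`. For large `k` we have
`a_{k+1} ≤ c q_k^{α-1}`, so comparing `Σ_{j ≤ A} j^{-t}` with `A^{1-t}/(1-t)` bounds the `k`-th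
block of the double sum by a constant times `q_k^{-s}`. The denominators at least double every
two steps, hence the tail `Σ_{k ≥ m} q_k^{-s}` is dominated by a geometric series, i.e. by a
constant times `q_m^{-s}`. So `q_m^{tr}` times the double sum is `O(q_m^{tr - s})`: bounded for
`tr = s`, and tending to `0` for `tr < s` because `q_m → ∞`.
-/

open Filter Topology MeasureTheory

namespace CFPaper

/-- Continued fraction denominators: `q 0 = 1`, `q 1 = a 1`, `q (n+2) = a (n+2) * q (n+1) + q n`. -/
def cfQ (a : ℕ → ℕ) : ℕ → ℕ
  | 0 => 1
  | 1 => a 1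
  | (n+2) => a (n+2) * cfQ a (n+1) + cfQ a n

/-- Continued fraction numerators. -/
def cfP (a : ℕ → ℕ) : ℕ → ℕ
  | 0 => 0
  | 1 => 1
  | (n+2) => a (n+2) * cfP a (n+1) + cfP a n

/-- `q_{n-1}` with the convention `q_{-1} = 0`. -/
def qext (a : ℕ → ℕ) : ℕ → ℕ
  | 0 => 0
  | (n+1) => cfQ a n

/-- `p_{n-1}` with the convention `p_{-1} = 1`. -/
def pext (a : ℕ → ℕ) : ℕ → ℕ
  | 0 => 1
  | (n+1) => cfP a n

/-- `a` (with `a 1, a 2, …` relevant) is the continued fraction expansion of the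
irrational `θ`: all entries are positive and the convergents tend to `θ`. -/
def IsCF (θ : ℝ) (a : ℕ → ℕ) : Prop :=
  Irrational θ ∧ (∀ n, 1 ≤ n → 1 ≤ a n) ∧
    Tendsto (fun n => (cfP a n : ℝ) / (cfQ a n : ℝ)) atTop (nhds θ)

/-- `A_α(θ) = limsup_n a_n q_{n-1}^{1-α}` (valued in `ℝ≥0∞`). -/
noncomputable def Acf (a : ℕ → ℕ) (α : ℝ) : ENNReal :=
  Filter.limsup (fun n => (a (n+1) : ENNReal) * (cfQ a n : ENNReal) ^ (1 - α)) atTop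

/-- The left shift on infinite binary sequences. -/
def shiftMap (x : ℕ → Bool) : ℕ → Bool := fun n => x (n+1)

/-- A subshift: a closed shift-invariant subset of `{0,1}^ℕ`. -/
def IsSubshift (Y : Set (ℕ → Bool)) : Prop := IsClosed Y ∧ shiftMap '' Y = Y

/-- The language of `Y`: all finite factors of elements of `Y`. -/
def Lang (Y : Set (ℕ → Bool)) : Set (List Bool) :=
  {w | ∃ x ∈ Y, ∃ k, w = (List.range w.length).map fun i => x (k + i)}

/-- The rotation sequence of slope `θ`: `x n = ⌈θ(n+1)⌉ - ⌈θ n⌉` (as a boolean, `true` = 1). -/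
noncomputable def rotWord (θ : ℝ) : ℕ → Bool :=
  fun n => if ⌈θ * ((n : ℝ)+1)⌉ - ⌈θ * (n : ℝ)⌉ = 1 then true else false

/-- The Sturmian subshift of slope `θ`: orbit closure of the rotation sequence. -/
noncomputable def sturmian (θ : ℝ) : Set (ℕ → Bool) :=
  closure {x | ∃ k, x = shiftMap^[k] (rotWord θ)}

/-- `w` is a nonempty proper prefix and suffix of `W`, both in the language of `Y`. -/
def PSPair (Y : Set (ℕ → Bool)) (w W : List Bool) : Prop :=
  w ∈ Lang Y ∧ W ∈ Lang Y ∧ w <+: W ∧ w <:+ W ∧ W ≠ w ∧ w ≠ []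

/-- `A_{α,n}`: infimum of `(|W|-|w|)/|w|^{1/α}` over admissible pairs with `|W| = n`. -/
noncomputable def repA (Y : Set (ℕ → Bool)) (α : ℝ) (n : ℕ) : ENNReal :=
  sInf {r | ∃ w W, PSPair Y w W ∧ W.length = n ∧
    r = ((W.length - w.length : ℕ) : ENNReal) / ((w.length : ENNReal) ^ (1/α))}

/-- `ℓ_α = liminf_n A_{α,n}`. -/
noncomputable def ellCf (Y : Set (ℕ → Bool)) (α : ℝ) : ENNReal :=
  Filter.liminf (repA Y α) atTop

/-- `ℓ`: infimum of `(|W|-|w|)/|w|` over all admissible pairs; `Y` is repulsive if `ℓ > 0`. -/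
noncomputable def ellRep (Y : Set (ℕ → Bool)) : ENNReal :=
  sInf {r | ∃ w W, PSPair Y w W ∧
    r = ((W.length - w.length : ℕ) : ENNReal) / (w.length : ENNReal)}

/-- The repetitive function: `repFun Y r` is the least `r'` such that every word of
length `r'` in the language contains every word of length `r` as a factor. -/
noncomputable def repFun (Y : Set (ℕ → Bool)) (r : ℕ) : ℕ :=
  sInf {r' | ∀ W ∈ Lang Y, W.length = r' → ∀ w ∈ Lang Y, w.length = r → w <:+: W}

/-- `R_α = limsup_n R(n)/n^α`. -/
noncomputable def Ralpha (Y : Set (ℕ → Bool)) (α : ℝ) : ENNReal :=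
  Filter.limsup (fun n => (repFun Y n : ENNReal) / (n : ENNReal) ^ α) atTop

/-- `Q(n)`: the supremum of powers `p` such that some word of length `n` has `W^p` in the language. -/
noncomputable def Qfun (Y : Set (ℕ → Bool)) (n : ℕ) : ENNReal :=
  sSup {x | ∃ p : ℕ, x = (p : ENNReal) ∧ ∃ W ∈ Lang Y,
    W.length = n ∧ (List.replicate p W).flatten ∈ Lang Y}

/-- `Q_α = limsup_n Q(n)/n^{α-1}`. -/
noncomputable def Qalpha (Y : Set (ℕ → Bool)) (α : ℝ) : ENNReal :=
  Filter.limsup (fun n => Qfun Y n / (n : ENNReal) ^ (α - 1)) atTop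

/-- The Jarník set `J_β^c`. -/
def Jarnik (β c : ℝ) : Set ℝ :=
  {x | x ∈ Set.Icc (0:ℝ) 1 ∧
    {pq : ℕ × ℕ | 0 < pq.2 ∧ |x - (pq.1 : ℝ)/(pq.2 : ℝ)| ≤ c * (pq.2 : ℝ) ^ (-β)}.Infinite}

/-- The exact Jarník set `Exact(β)`. -/
def ExactSet (β : ℝ) : Set ℝ :=
  Jarnik β 1 \ ⋃ n ∈ {n : ℕ | 2 ≤ n}, Jarnik β ((n : ℝ)/((n : ℝ)+1))

/-- The substitution `τ` : `0 ↦ 0`, `1 ↦ 10`. -/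
def tauW (w : List Bool) : List Bool := w.flatMap fun b => if b then [true, false] else [false]

/-- The substitution `ρ` : `0 ↦ 01`, `1 ↦ 1`. -/
def rhoW (w : List Bool) : List Bool := w.flatMap fun b => if b then [true] else [false, true]

/-- The composition `τ^{a₁} ∘ ρ^{a₂} ∘ ⋯ ∘ τ^{a_{2k-1}} ∘ ρ^{a_{2k}}`. -/
def stageW (a : ℕ → ℕ) : ℕ → List Bool → List Bool
  | 0 => id
  | (k+1) => stageW a k ∘ tauW^[a (2*k+1)] ∘ rhoW^[a (2*k+2)]

/-- The word `R_k`. -/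
def Rw (a : ℕ → ℕ) (k : ℕ) : List Bool := stageW a k [false]

/-- The word `L_k`. -/
def Lw (a : ℕ → ℕ) (k : ℕ) : List Bool := stageW a k [true]

/-- Best rational approximation of the first kind. -/
def IsBestApprox (θ : ℝ) (p q : ℕ) : Prop :=
  0 < q ∧ Nat.Coprime p q ∧
    ∀ p' q' : ℕ, 0 < q' → q' < q → |θ - (p : ℝ)/(q : ℝ)| < |θ - (p' : ℝ)/(q' : ℝ)|

/-- The double sum `Σ_{k ≥ m} Σ_{j=1}^{a_{k+1}} (j q_k + q_{k-1})^{-t}` (valued in `ℝ≥0∞`). -/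
noncomputable def dblSum (a : ℕ → ℕ) (t : ℝ) (m : ℕ) : ENNReal :=
  ∑' k : ℕ, if m ≤ k then
    ∑ j ∈ Finset.Icc 1 (a (k+1)), ((j * cfQ a k + qext a k : ℕ) : ENNReal) ^ (-t)
  else 0

open scoped ENNReal

theorem rpow_neg_le_rpow_neg_of_le {x y : ℝ≥0∞} {s : ℝ} (hs : 0 ≤ s) (hxy : x ≤ y) :
    y ^ (-s) ≤ x ^ (-s) := by
  rw [ENNReal.rpow_neg, ENNReal.rpow_neg]
  exact ENNReal.inv_le_inv.2 (ENNReal.rpow_le_rpow hxy hs)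

theorem rpow_neg_le_sub_rpow {t : ℝ} (ht0 : 0 ≤ t) (ht1 : t ≤ 1) {x : ℝ} (hx : 1 ≤ x) :
    (1 - t) * x ^ (-t) ≤ x ^ (1 - t) - (x - 1) ^ (1 - t) := by
  have hx0 : 0 < x := one_pos.trans_le hx
  have bernoulli : (1 + -x⁻¹) ^ (1 - t) ≤ 1 + (1 - t) * -x⁻¹ :=
    rpow_one_add_le_one_add_mul_self (by simpa using inv_le_one_of_one_le₀ hx) (by linarith)
      (by linarith)
  have hsplit : (x - 1) ^ (1 - t) = (1 + -x⁻¹) ^ (1 - t) * x ^ (1 - t) := by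
    rw [← Real.mul_rpow (by simpa using inv_le_one_of_one_le₀ hx) hx0.le]
    congr 1
    field_simp
    ring
  have hpow : x⁻¹ * x ^ (1 - t) = x ^ (-t) := by
    rw [sub_eq_add_neg, Real.rpow_add hx0, Real.rpow_one, inv_mul_cancel_left₀ hx0.ne']
  have := mul_le_mul_of_nonneg_right bernoulli (Real.rpow_pos_of_pos hx0 (1 - t)).le
  rw [hsplit, ← hpow]
  linear_combination this

theorem sum_Icc_rpow_neg_le {t : ℝ} (ht0 : 0 ≤ t) (ht1 : t < 1) (A : ℕ) :
    ∑ j ∈ Finset.Icc 1 A, (j : ℝ) ^ (-t) ≤ (A : ℝ) ^ (1 - t) / (1 - t) := by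
  induction A with
  | zero => simp [Real.zero_rpow (by linarith : 1 - t ≠ 0)]
  | succ A ih =>
    have step := rpow_neg_le_sub_rpow ht0 ht1.le (x := A + 1) (by simp)
    rw [add_sub_cancel_right] at step
    rw [Finset.sum_Icc_succ_top (by omega), Nat.cast_succ]
    calc _ ≤ (A : ℝ) ^ (1 - t) / (1 - t)
          + ((A + 1 : ℝ) ^ (1 - t) - (A : ℝ) ^ (1 - t)) / (1 - t) := by
          gcongr
          rw [le_div_iff₀ (by linarith)]
          linarith
      _ = _ := by ring

theorem sum_Icc_natCast_mul_add_rpow_neg_le {t : ℝ} (ht0 : 0 ≤ t) (ht1 : t < 1) (A Q R : ℕ) :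
    ∑ j ∈ Finset.Icc 1 A, ((j * Q + R : ℕ) : ℝ≥0∞) ^ (-t)
      ≤ ENNReal.ofReal ((A : ℝ) ^ (1 - t) / (1 - t)) * (Q : ℝ≥0∞) ^ (-t) := by
  calc ∑ j ∈ Finset.Icc 1 A, ((j * Q + R : ℕ) : ℝ≥0∞) ^ (-t)
      ≤ ∑ j ∈ Finset.Icc 1 A, ENNReal.ofReal ((j : ℝ) ^ (-t)) * (Q : ℝ≥0∞) ^ (-t) := by
        refine Finset.sum_le_sum fun j hj => ?_
        have hj : (0 : ℝ) < j := by exact_mod_cast (Finset.mem_Icc.1 hj).1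
        calc ((j * Q + R : ℕ) : ℝ≥0∞) ^ (-t) ≤ ((j * Q : ℕ) : ℝ≥0∞) ^ (-t) :=
              rpow_neg_le_rpow_neg_of_le ht0 (by exact_mod_cast Nat.le_add_right _ _)
          _ = _ := by
              rw [Nat.cast_mul, ENNReal.mul_rpow_of_ne_top (by simp) (by simp),
                ← ENNReal.ofReal_rpow_of_pos hj, ENNReal.ofReal_natCast]
    _ = ENNReal.ofReal (∑ j ∈ Finset.Icc 1 A, (j : ℝ) ^ (-t)) * (Q : ℝ≥0∞) ^ (-t) := by
        rw [← Finset.sum_mul, ENNReal.ofReal_sum_of_nonneg fun j _ => by positivity]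
    _ ≤ _ := by gcongr; exact sum_Icc_rpow_neg_le ht0 ht1 A

theorem sum_Icc_rpow_neg_le_of_mul_rpow_le {t α c : ℝ} (ht0 : 0 ≤ t) (ht1 : t < 1) {A Q : ℕ}
    (hQ : 0 < Q) (hA : (A : ℝ) * (Q : ℝ) ^ (1 - α) ≤ c) (R : ℕ) :
    ∑ j ∈ Finset.Icc 1 A, ((j * Q + R : ℕ) : ℝ≥0∞) ^ (-t)
      ≤ ENNReal.ofReal (c ^ (1 - t) / (1 - t)) * (Q : ℝ≥0∞) ^ (-(t * α - (α - 1))) := by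
  have hQ' : (0 : ℝ) < Q := by exact_mod_cast hQ
  have hc : 0 ≤ c := le_trans (by positivity) hA
  have hA' : (A : ℝ) ≤ c * (Q : ℝ) ^ (α - 1) := by
    calc (A : ℝ) = A * (Q : ℝ) ^ (1 - α) * (Q : ℝ) ^ (α - 1) := by
          rw [mul_assoc, ← Real.rpow_add hQ']
          norm_num
      _ ≤ c * (Q : ℝ) ^ (α - 1) := by gcongr
  have hApow : (A : ℝ) ^ (1 - t) ≤ c ^ (1 - t) * (Q : ℝ) ^ ((α - 1) * (1 - t)) := by
    calc (A : ℝ) ^ (1 - t) ≤ (c * (Q : ℝ) ^ (α - 1)) ^ (1 - t) := by gcongr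
      _ = _ := by rw [Real.mul_rpow hc (by positivity), ← Real.rpow_mul hQ'.le]
  refine (sum_Icc_natCast_mul_add_rpow_neg_le ht0 ht1 A Q R).trans ?_
  calc ENNReal.ofReal ((A : ℝ) ^ (1 - t) / (1 - t)) * (Q : ℝ≥0∞) ^ (-t)
      ≤ ENNReal.ofReal (c ^ (1 - t) / (1 - t)) * (Q : ℝ≥0∞) ^ ((α - 1) * (1 - t))
          * (Q : ℝ≥0∞) ^ (-t) := by
        gcongr
        rw [← ENNReal.ofReal_natCast, ENNReal.ofReal_rpow_of_pos hQ',
          ← ENNReal.ofReal_mul (div_nonneg (Real.rpow_nonneg hc _) (by linarith)),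
          div_mul_eq_mul_div]
        gcongr
    _ = _ := by
        rw [mul_assoc, ← ENNReal.rpow_add _ _ (by simpa using hQ.ne') (by simp)]
        ring_nf

section Doubling

variable {q : ℕ → ℕ}

theorem two_pow_mul_le_of_two_mul_le (hq : ∀ n, 2 * q n ≤ q (n + 2)) (m i : ℕ) :
    2 ^ i * q m ≤ q (m + 2 * i) := by
  induction i with
  | zero => simp
  | succ i ih =>
    calc 2 ^ (i + 1) * q m = 2 * (2 ^ i * q m) := by ring
      _ ≤ 2 * q (m + 2 * i) := by omega
      _ ≤ q (m + 2 * (i + 1)) := hq _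

theorem tendsto_atTop_of_two_mul_le (hmono : Monotone q) (hq : ∀ n, 2 * q n ≤ q (n + 2))
    (h0 : 0 < q 0) : Tendsto q atTop atTop :=
  hmono.tendsto_atTop_atTop fun b => ⟨2 * b, calc
    b ≤ 2 ^ b * q 0 := Nat.lt_two_pow_self.le.trans (Nat.le_mul_of_pos_right _ h0)
    _ ≤ q (2 * b) := by simpa using two_pow_mul_le_of_two_mul_le hq 0 b⟩

theorem tsum_rpow_neg_le_of_two_mul_le (hmono : Monotone q) (hq : ∀ n, 2 * q n ≤ q (n + 2))
    {s : ℝ} (hs : 0 ≤ s) (m : ℕ) :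
    ∑' i, (q (m + i) : ℝ≥0∞) ^ (-s) ≤ 2 * (1 - 2 ^ (-s))⁻¹ * (q m : ℝ≥0∞) ^ (-s) := by
  have geometric : ∀ g : ℕ → ℕ, (∀ j, 2 * j ≤ g j) →
      ∑' j, (q (m + g j) : ℝ≥0∞) ^ (-s) ≤ (1 - 2 ^ (-s))⁻¹ * (q m : ℝ≥0∞) ^ (-s) := by
    intro g hg
    calc ∑' j, (q (m + g j) : ℝ≥0∞) ^ (-s)
        ≤ ∑' j, (2 ^ (-s)) ^ j * (q m : ℝ≥0∞) ^ (-s) := by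
          refine ENNReal.tsum_le_tsum fun j => ?_
          have hle : ((2 ^ j * q m : ℕ) : ℝ≥0∞) ≤ q (m + g j) := by
            have := hg j
            exact_mod_cast (two_pow_mul_le_of_two_mul_le hq m j).trans (hmono (by omega))
          calc (q (m + g j) : ℝ≥0∞) ^ (-s) ≤ ((2 ^ j * q m : ℕ) : ℝ≥0∞) ^ (-s) :=
                rpow_neg_le_rpow_neg_of_le hs hle
            _ = (2 ^ (-s)) ^ j * (q m : ℝ≥0∞) ^ (-s) := by
                rw [Nat.cast_mul, ENNReal.mul_rpow_of_ne_top (by simp) (by simp), Nat.cast_pow,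
                  Nat.cast_ofNat, ← ENNReal.rpow_natCast, ← ENNReal.rpow_mul, mul_comm (j : ℝ),
                  ENNReal.rpow_mul, ENNReal.rpow_natCast]
      _ = (1 - 2 ^ (-s))⁻¹ * (q m : ℝ≥0∞) ^ (-s) := by
          rw [ENNReal.tsum_mul_right, ENNReal.tsum_geometric]
  -- even and odd indices each give a geometric series of ratio `2 ^ (-s)`
  rw [← tsum_even_add_odd ENNReal.summable ENNReal.summable, two_mul, add_mul]
  exact add_le_add (geometric _ fun j => le_rfl) (geometric _ fun j => by omega)

end Doubling

theorem limsup_rpow_mul_lt_top {u : ℕ → ℝ≥0∞} {x : ℕ → ℕ} {s : ℝ} {C : ℝ≥0∞} (hC : C ≠ ⊤)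
    (hx : ∀ m, x m ≠ 0) (hu : ∀ᶠ m in atTop, u m ≤ C * (x m : ℝ≥0∞) ^ (-s)) :
    limsup (fun m => (x m : ℝ≥0∞) ^ s * u m) atTop < ⊤ := by
  refine (limsup_le_of_le (by isBoundedDefault) (hu.mono fun m hm => ?_)).trans_lt hC.lt_top
  calc (x m : ℝ≥0∞) ^ s * u m ≤ (x m : ℝ≥0∞) ^ s * (C * (x m : ℝ≥0∞) ^ (-s)) := by gcongr
    _ = C := by
        rw [mul_left_comm, ← ENNReal.rpow_add _ _ (by simpa using hx m) (by simp),
          add_neg_cancel, ENNReal.rpow_zero, mul_one]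

theorem limsup_rpow_mul_eq_zero {u : ℕ → ℝ≥0∞} {x : ℕ → ℕ} {r s : ℝ} {C : ℝ≥0∞} (hC : C ≠ ⊤)
    (hx : Tendsto x atTop atTop) (hrs : r < s)
    (hu : ∀ᶠ m in atTop, u m ≤ C * (x m : ℝ≥0∞) ^ (-s)) :
    limsup (fun m => (x m : ℝ≥0∞) ^ r * u m) atTop = 0 := by
  have hpow : Tendsto (fun m => (x m : ℝ≥0∞) ^ (r - s)) atTop (𝓝 0) := by
    have := ((ENNReal.continuous_rpow_const (y := r - s)).tendsto ⊤).comp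
      (ENNReal.tendsto_nat_nhds_top.comp hx)
    rwa [ENNReal.top_rpow_of_neg (sub_neg.2 hrs)] at this
  have hlim : Tendsto (fun m => C * (x m : ℝ≥0∞) ^ (r - s)) atTop (𝓝 0) := by
    simpa using ENNReal.Tendsto.const_mul hpow (Or.inr hC)
  refine (tendsto_of_tendsto_of_tendsto_of_le_of_le' tendsto_const_nhds hlim
    (Eventually.of_forall fun _ => bot_le) ?_).limsup_eq
  filter_upwards [hu, hx.eventually_ne_atTop 0] with m hm hm0
  calc (x m : ℝ≥0∞) ^ r * u m ≤ (x m : ℝ≥0∞) ^ r * (C * (x m : ℝ≥0∞) ^ (-s)) := by gcongr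
    _ = C * (x m : ℝ≥0∞) ^ (r - s) := by
        rw [mul_left_comm, ← ENNReal.rpow_add _ _ (by simpa using hm0) (by simp), sub_eq_add_neg]

noncomputable def blockSum (a : ℕ → ℕ) (t : ℝ) (k : ℕ) : ℝ≥0∞ :=
  ∑ j ∈ Finset.Icc 1 (a (k + 1)), ((j * cfQ a k + qext a k : ℕ) : ℝ≥0∞) ^ (-t)

theorem dblSum_eq_tsum_blockSum (a : ℕ → ℕ) (t : ℝ) (m : ℕ) :
    dblSum a t m = ∑' i, blockSum a t (m + i) := by
  rw [dblSum, ← ENNReal.summable.sum_add_tsum_nat_add' (k := m), Finset.sum_eq_zero, zero_add]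
  · simp_rw [add_comm _ m]
    exact tsum_congr fun i => if_pos (Nat.le_add_right m i)
  · intro i hi
    simp [(Finset.mem_range.1 hi).not_ge]

section ContinuedFraction

variable {a : ℕ → ℕ}

theorem cfQ_pos (ha : ∀ n, 1 ≤ n → 1 ≤ a n) : ∀ n, 0 < cfQ a n
  | 0 => Nat.one_pos
  | 1 => ha 1 le_rfl
  | n + 2 => Nat.lt_add_left _ (cfQ_pos ha n)

theorem cfQ_le_cfQ_succ (ha : ∀ n, 1 ≤ n → 1 ≤ a n) : ∀ n, cfQ a n ≤ cfQ a (n + 1)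
  | 0 => ha 1 le_rfl
  | n + 1 => (Nat.le_mul_of_pos_left _ (ha (n + 2) (by omega))).trans (Nat.le_add_right _ _)

theorem cfQ_mono (ha : ∀ n, 1 ≤ n → 1 ≤ a n) : Monotone (cfQ a) :=
  monotone_nat_of_le_succ (cfQ_le_cfQ_succ ha)

theorem two_mul_cfQ_le (ha : ∀ n, 1 ≤ n → 1 ≤ a n) (n : ℕ) : 2 * cfQ a n ≤ cfQ a (n + 2) := by
  have h1 := cfQ_le_cfQ_succ ha n
  have h2 := Nat.le_mul_of_pos_left (cfQ a (n + 1)) (ha (n + 2) (by omega))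
  change 2 * cfQ a n ≤ a (n + 2) * cfQ a (n + 1) + cfQ a n
  omega

theorem tendsto_cfQ_atTop (ha : ∀ n, 1 ≤ n → 1 ≤ a n) : Tendsto (cfQ a) atTop atTop :=
  tendsto_atTop_of_two_mul_le (cfQ_mono ha) (two_mul_cfQ_le ha) Nat.one_pos

theorem exists_dblSum_le (ha : ∀ n, 1 ≤ n → 1 ≤ a n) {t α c : ℝ} (ht0 : 0 ≤ t) (ht1 : t < 1)
    (hs : 0 < t * α - (α - 1))
    (hb : ∀ᶠ k in atTop, (a (k + 1) : ℝ) * (cfQ a k : ℝ) ^ (1 - α) ≤ c) :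
    ∃ C : ℝ≥0∞, C ≠ ⊤ ∧
      ∀ᶠ m in atTop, dblSum a t m ≤ C * (cfQ a m : ℝ≥0∞) ^ (-(t * α - (α - 1))) := by
  set s := t * α - (α - 1)
  obtain ⟨N, hN⟩ := eventually_atTop.1 hb
  have h2s : (2 : ℝ≥0∞) ^ (-s) < 1 :=
    ENNReal.rpow_lt_one_of_one_lt_of_neg (by norm_num) (neg_lt_zero.2 hs)
  refine ⟨ENNReal.ofReal (c ^ (1 - t) / (1 - t)) * (2 * (1 - 2 ^ (-s))⁻¹), ?_,
    eventually_atTop.2 ⟨N, fun m hm => ?_⟩⟩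
  · exact ENNReal.mul_ne_top ENNReal.ofReal_ne_top
      (ENNReal.mul_ne_top ENNReal.ofNat_ne_top (ENNReal.inv_ne_top.2 (tsub_pos_of_lt h2s).ne'))
  calc dblSum a t m = ∑' i, blockSum a t (m + i) := dblSum_eq_tsum_blockSum a t m
    _ ≤ ∑' i, ENNReal.ofReal (c ^ (1 - t) / (1 - t)) * (cfQ a (m + i) : ℝ≥0∞) ^ (-s) :=
        ENNReal.tsum_le_tsum fun i => sum_Icc_rpow_neg_le_of_mul_rpow_le ht0 ht1
          (cfQ_pos ha _) (hN _ (by omega)) _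
    _ = ENNReal.ofReal (c ^ (1 - t) / (1 - t)) * ∑' i, (cfQ a (m + i) : ℝ≥0∞) ^ (-s) :=
        ENNReal.tsum_mul_left
    _ ≤ _ := by
        rw [mul_assoc]
        gcongr
        exact tsum_rpow_neg_le_of_two_mul_le (cfQ_mono ha) (two_mul_cfQ_le ha) hs.le m

end ContinuedFraction

theorem stmt19_general (θ : ℝ) (a : ℕ → ℕ) (α t : ℝ) (hα : 1 < α)
    (ht : t ∈ Set.Ioo (1 - 1/α) 1) (hcf : IsCF θ a)
    (c : ℝ)
    (hb : ∀ᶠ k in atTop, (a (k+1) : ℝ) * (cfQ a k : ℝ) ^ (1 - α) < c) :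
    (Filter.limsup
      (fun m => (cfQ a m : ENNReal) ^ (t * (α - (α-1)/t)) * dblSum a t m) atTop < ⊤) ∧
    (∀ r : ℝ, 0 < r → r < α - (α-1)/t →
      Filter.limsup
        (fun m => (cfQ a m : ENNReal) ^ (t * r) * dblSum a t m) atTop = 0) := by
  have ha := hcf.2.1
  have hα0 : 0 < α := one_pos.trans hα
  have ht0 : 0 < t := lt_of_le_of_lt (sub_nonneg.2 ((div_le_one hα0).2 hα.le)) ht.1
  have hts : t * (α - (α - 1) / t) = t * α - (α - 1) := by field_simp
  have hs : 0 < t * α - (α - 1) := by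
    have := (mul_lt_mul_iff_of_pos_left hα0).2 ht.1
    field_simp at this
    linarith
  obtain ⟨C, hC, hdbl⟩ := exists_dblSum_le ha ht0.le ht.2 hs (hb.mono fun _ => le_of_lt)
  refine ⟨hts ▸ limsup_rpow_mul_lt_top hC (fun m => (cfQ_pos ha m).ne') hdbl,
    fun r _ hr => limsup_rpow_mul_eq_zero hC (tendsto_cfQ_atTop ha) ?_ hdbl⟩
  rw [← hts]
  exact mul_lt_mul_of_pos_left hr ht0

/-- for `t ∈ (1 − 1/α, 1)` and `A_α(θ) < ∞`, the limsup
`limsup_m q_m^{tr} Σ_{k≥m} Σ_{j=1}^{a_{k+1}} (j q_k + q_{k-1})^{-t}` is finite for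
`r = α − (α−1)/t` and vanishes for `0 < r < α − (α−1)/t`. -/
theorem stmt19 (θ : ℝ) (a : ℕ → ℕ) (α t : ℝ) (hα : 1 < α)
    (ht : t ∈ Set.Ioo (1 - 1/α) 1) (hcf : IsCF θ a)
    (c : ℝ) (hc : 1 < c)
    (hb : ∀ᶠ k in atTop, (a (k+1) : ℝ) * (cfQ a k : ℝ) ^ (1 - α) < c) :
    (Filter.limsup
      (fun m => (cfQ a m : ENNReal) ^ (t * (α - (α-1)/t)) * dblSum a t m) atTop < ⊤) ∧
    (∀ r : ℝ, 0 < r → r < α - (α-1)/t →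
      Filter.limsup
        (fun m => (cfQ a m : ENNReal) ^ (t * r) * dblSum a t m) atTop = 0) :=
  stmt19_general θ a α t hα ht hcf c hb

end CFPaper
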